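/- For every N ∈ ℕ, N ≥ 3, the point x_N lies in the interior of the largest gap of the points x₁, …, x_{N−1} on the torus; this largest gap has length (log(N) − log(N−1))/log(2), and x_N splits it into one gap of length (log(2N) − log(2N−1))/log(2) and one gap of length (log(2N−1) − log(2N−2))/log(2). -/

import Mathlib

/-- The sequence `x_n = {log(2n-1)/log 2}`. -/
noncomputable def xseq (n : ℕ) : ℝ := Int.fract (Real.log (2 * (n : ℝ) - 1) / Real.log 2)

/-- The gap to the right (on the torus `ℝ/ℤ`) of the point `x_k` among the points
`x_1, …, x_N`. -/
noncomputable def gapRight (N k : ℕ) : ℝ :=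
  sInf ((fun l => Int.fract (xseq l - xseq k)) '' (Set.Icc 1 N \ {k}))

/-!
Multiplying `2n - 1` by a power of two does not move `x_n`, and scaling each of the odd numbers
`1, 3, …, 2P - 1` into the window `[P, 2P)` hits every integer of the window exactly once. So
`x_1, …, x_P` are the points `{log₂ k}`, `P ≤ k < 2P`, whose gaps are `log₂ ((k + 1) / k)`, the
last one wrapping around from `log₂ (2P - 1)` to `log₂ (2P) ≡ log₂ P`. The largest gap is
`[log₂ P, log₂ (P + 1)]`, and `x_{P+1} = {log₂ (2P + 1)} = {log₂ (P + 1/2)}` falls inside it.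
-/

open Real Finset

lemma Int.fract_fract_sub_fract {R : Type*} [Ring R] [LinearOrder R] [IsStrictOrderedRing R]
    [FloorRing R] (a b : R) : Int.fract (Int.fract a - Int.fract b) = Int.fract (a - b) :=
  Int.fract_eq_fract.mpr ⟨⌊b⌋ - ⌊a⌋, by simp only [Int.fract]; push_cast; abel⟩

lemma logb_two_two_mul {x : ℝ} (hx : x ≠ 0) : logb 2 (2 * x) = logb 2 x + 1 := by
  rw [logb_mul two_ne_zero hx, logb_self_eq_one one_lt_two, add_comm]

lemma fract_logb_two_sub_of_le {a b : ℝ} (hb : 0 < b) (hba : b ≤ a) (hab : a < 2 * b) :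
    Int.fract (logb 2 a - logb 2 b) = logb 2 a - logb 2 b := by
  have h2b := logb_two_two_mul hb.ne'
  rw [Int.fract_eq_self]
  constructor
  · linarith [logb_le_logb_of_le one_lt_two hb hba]
  · linarith [logb_lt_logb one_lt_two (hb.trans_le hba) hab]

lemma fract_logb_two_sub_of_lt {a b : ℝ} (ha : 0 < a) (hab : a < b) (hba : b ≤ 2 * a) :
    Int.fract (logb 2 a - logb 2 b) = logb 2 (2 * a) - logb 2 b := by
  rw [← fract_logb_two_sub_of_le (ha.trans hab) hba (by linarith), logb_two_two_mul ha.ne',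
    add_sub_right_comm, Int.fract_add_one]

lemma logb_add_one_sub_logb_antitoneOn {b : ℝ} (hb : 1 < b) :
    AntitoneOn (fun x ↦ logb b (x + 1) - logb b x) (Set.Ioi 0) := by
  intro x hx y hy hxy
  simp only [Set.mem_Ioi] at hx hy
  dsimp only
  rw [← logb_div (by linarith) hy.ne', ← logb_div (by linarith) hx.ne']
  refine logb_le_logb_of_le hb (by positivity) ?_
  rw [div_le_div_iff₀ hy hx]
  linarith

/-- `m * 2 ^ a` for the unique `a` that puts it into `[P, 2P)` (when `0 < m < 2P`). -/
def dyadicRep (P m : ℕ) : ℕ := m * 2 ^ Nat.log 2 ((2 * P - 1) / m)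

lemma dyadicRep_mem_Ico {P m : ℕ} (hm : 0 < m) (hmP : m < 2 * P) :
    dyadicRep P m ∈ Ico P (2 * P) := by
  set j := Nat.log 2 ((2 * P - 1) / m)
  have hle : 2 ^ j ≤ (2 * P - 1) / m := Nat.pow_log_le_self 2 (Nat.div_pos (by omega) hm).ne'
  have hlt : (2 * P - 1) / m < 2 ^ (j + 1) := Nat.lt_pow_succ_log_self one_lt_two _
  rw [Nat.le_div_iff_mul_le hm, mul_comm] at hle
  rw [Nat.div_lt_iff_lt_mul hm, pow_succ, mul_right_comm, mul_comm _ m] at hlt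
  change m * 2 ^ j ∈ Ico P (2 * P)
  rw [mem_Ico]
  omega

lemma le_of_mul_two_pow_mem_Ico {P m a b : ℕ} (ha : m * 2 ^ a ∈ Ico P (2 * P))
    (hb : m * 2 ^ b ∈ Ico P (2 * P)) : a ≤ b := by
  by_contra! hba
  have : 2 * (m * 2 ^ b) ≤ m * 2 ^ a := by
    rw [mul_left_comm, ← pow_succ']
    exact Nat.mul_le_mul_left m (Nat.pow_le_pow_right two_pos hba)
  simp only [mem_Ico] at ha hb
  omega

lemma dyadicRep_eq_of_mem_Ico {P m a : ℕ} (hm : 0 < m) (ha : m * 2 ^ a ∈ Ico P (2 * P)) :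
    dyadicRep P m = m * 2 ^ a := by
  have hrep := dyadicRep_mem_Ico (P := P) hm
    (by simp only [mem_Ico] at ha; nlinarith [Nat.one_le_two_pow (n := a)])
  rw [dyadicRep] at hrep ⊢
  rw [le_antisymm (le_of_mul_two_pow_mem_Ico hrep ha) (le_of_mul_two_pow_mem_Ico ha hrep)]

lemma dyadicRep_odd_mapsTo (P : ℕ) :
    Set.MapsTo (fun n ↦ dyadicRep P (2 * n - 1)) (Icc 1 P) (Ico P (2 * P)) := by
  intro n hn
  rw [mem_coe, mem_Icc] at hn
  exact dyadicRep_mem_Ico (by omega) (by omega)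

lemma dyadicRep_odd_surjOn (P : ℕ) :
    Set.SurjOn (fun n ↦ dyadicRep P (2 * n - 1)) (Icc 1 P) (Ico P (2 * P)) := by
  intro k hk
  rw [coe_Ico, Set.mem_Ico] at hk
  obtain ⟨a, m, ⟨i, rfl⟩, rfl⟩ := Nat.exists_eq_two_pow_mul_odd (n := k) (by omega)
  rw [mul_comm] at hk ⊢
  have hodd : 2 * i + 1 ≤ (2 * i + 1) * 2 ^ a := Nat.le_mul_of_pos_right _ (Nat.two_pow_pos a)
  refine ⟨i + 1, by rw [mem_coe, mem_Icc]; omega, ?_⟩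
  change dyadicRep P (2 * (i + 1) - 1) = _
  rw [show 2 * (i + 1) - 1 = 2 * i + 1 by omega]
  exact dyadicRep_eq_of_mem_Ico (by omega) (mem_Ico.mpr hk)

lemma dyadicRep_odd_injOn (P : ℕ) :
    Set.InjOn (fun n ↦ dyadicRep P (2 * n - 1)) (Icc 1 P) :=
  injOn_of_surjOn_of_card_le _ (dyadicRep_odd_mapsTo P) (dyadicRep_odd_surjOn P)
    (by simp only [Nat.card_Icc, Nat.card_Ico]; omega)

lemma xseq_eq_fract_logb_dyadicRep {n : ℕ} (hn : 1 ≤ n) (P : ℕ) :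
    xseq n = Int.fract (logb 2 (dyadicRep P (2 * n - 1))) := by
  have hodd : ((2 * n - 1 : ℕ) : ℝ) = 2 * n - 1 := by
    rw [Nat.cast_sub (by omega)]; push_cast; ring
  have hpos : (0 : ℝ) < 2 * n - 1 := by
    rw [← hodd]; exact_mod_cast (by omega : 0 < 2 * n - 1)
  rw [xseq, log_div_log, dyadicRep, Nat.cast_mul, Nat.cast_pow, hodd,
    logb_mul hpos.ne' (by positivity), Nat.cast_ofNat, logb_pow, logb_self_eq_one one_lt_two,
    mul_one, Int.fract_add_natCast]

lemma logb_succ_sub_le_fract_logb_sub {P j k : ℕ} (hj : j ∈ Ico P (2 * P))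
    (hk : k ∈ Ico P (2 * P)) (hjk : j ≠ k) :
    logb 2 ((k : ℝ) + 1) - logb 2 k ≤ Int.fract (logb 2 j - logb 2 k) := by
  rw [mem_Ico] at hj hk
  have hj0 : (0 : ℝ) < j := by exact_mod_cast (by omega : 0 < j)
  have hk0 : (0 : ℝ) < k := by exact_mod_cast (by omega : 0 < k)
  rcases hjk.lt_or_gt with hlt | hgt
  · have hsucc : (k : ℝ) + 1 ≤ 2 * j := by exact_mod_cast (by omega : k + 1 ≤ 2 * j)
    rw [fract_logb_two_sub_of_lt hj0 (by exact_mod_cast hlt) (by linarith)]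
    linarith [logb_le_logb_of_le one_lt_two (by positivity) hsucc]
  · have hsucc : (k : ℝ) + 1 ≤ j := by exact_mod_cast hgt
    rw [fract_logb_two_sub_of_le hk0 (by exact_mod_cast hgt.le)
      (by exact_mod_cast (by omega : j < 2 * k))]
    linarith [logb_le_logb_of_le one_lt_two (by positivity) hsucc]

lemma exists_fract_logb_sub_eq_logb_succ_sub {P k : ℕ} (hP : 2 ≤ P) (hk : k ∈ Ico P (2 * P)) :
    ∃ j ∈ Ico P (2 * P), j ≠ k ∧
      Int.fract (logb 2 j - logb 2 k) = logb 2 ((k : ℝ) + 1) - logb 2 k := by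
  rw [mem_Ico] at hk
  by_cases hlast : k + 1 = 2 * P
  · refine ⟨P, by rw [mem_Ico]; omega, by omega, ?_⟩
    have hk' : (k : ℝ) + 1 = 2 * P := by exact_mod_cast hlast
    rw [hk', fract_logb_two_sub_of_lt (by positivity) (by exact_mod_cast (by omega : P < k))
      (by linarith)]
  · refine ⟨k + 1, by rw [mem_Ico]; omega, by omega, ?_⟩
    push_cast
    exact fract_logb_two_sub_of_le (by exact_mod_cast (by omega : 0 < k)) (by linarith)
      (by exact_mod_cast (by omega : k + 1 < 2 * k))

lemma gapRight_eq {P n : ℕ} (hP : 2 ≤ P) (hn : n ∈ Icc 1 P) :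
    gapRight P n =
      logb 2 ((dyadicRep P (2 * n - 1) : ℝ) + 1) - logb 2 (dyadicRep P (2 * n - 1)) := by
  have hfract : ∀ l ∈ Icc 1 P, Int.fract (xseq l - xseq n) =
      Int.fract (logb 2 (dyadicRep P (2 * l - 1)) - logb 2 (dyadicRep P (2 * n - 1))) := by
    intro l hl
    rw [mem_Icc] at hl hn
    rw [xseq_eq_fract_logb_dyadicRep hl.1 P, xseq_eq_fract_logb_dyadicRep hn.1 P,
      Int.fract_fract_sub_fract]
  refine IsLeast.csInf_eq ⟨?_, ?_⟩
  · obtain ⟨j, hj, hjn, hfj⟩ :=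
      exists_fract_logb_sub_eq_logb_succ_sub hP (dyadicRep_odd_mapsTo P hn)
    obtain ⟨l, hl, rfl⟩ := dyadicRep_odd_surjOn P hj
    refine ⟨l, ⟨by simpa using hl, fun hln ↦ hjn (by rw [Set.mem_singleton_iff.mp hln])⟩,
      (hfract l hl).trans hfj⟩
  · rintro _ ⟨l, ⟨hl, hln⟩, rfl⟩
    have hl' : l ∈ Icc 1 P := by simpa using hl
    dsimp only
    rw [hfract l hl']
    exact logb_succ_sub_le_fract_logb_sub (dyadicRep_odd_mapsTo P hl')
      (dyadicRep_odd_mapsTo P hn) fun h ↦ hln (dyadicRep_odd_injOn P hl' hn h)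

lemma gapRight_le {P k : ℕ} (hP : 2 ≤ P) (hk : k ∈ Icc 1 P) :
    gapRight P k ≤ logb 2 ((P : ℝ) + 1) - logb 2 P := by
  have hK : dyadicRep P (2 * k - 1) ∈ Ico P (2 * P) := dyadicRep_odd_mapsTo P hk
  rw [mem_Ico] at hK
  rw [gapRight_eq hP hk]
  exact logb_add_one_sub_logb_antitoneOn one_lt_two (by simp only [Set.mem_Ioi]; positivity)
    (by simp only [Set.mem_Ioi]; exact_mod_cast (by omega : 0 < dyadicRep P (2 * k - 1)))
    (by exact_mod_cast hK.1)

lemma fract_xseq_succ_sub_xseq {P m : ℕ} (hP : 1 ≤ P) (hm : 1 ≤ m)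
    (hmP : dyadicRep P (2 * m - 1) = P) :
    Int.fract (xseq (P + 1) - xseq m) = logb 2 (2 * (P : ℝ) + 1) - logb 2 (2 * P) := by
  have hP1 : (1 : ℝ) ≤ P := by exact_mod_cast hP
  rw [xseq_eq_fract_logb_dyadicRep hm P, hmP, xseq, log_div_log, Int.fract_fract_sub_fract,
    ← Int.fract_sub_one, sub_sub, ← logb_two_two_mul (by positivity)]
  push_cast
  rw [show 2 * ((P : ℝ) + 1) - 1 = 2 * P + 1 by ring]
  exact fract_logb_two_sub_of_le (by positivity) (by linarith) (by linarith)

theorem new_point_splits_largest_gap (N : ℕ) (hN : 3 ≤ N) :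
    ∃ m ∈ Finset.Icc 1 (N - 1),
      gapRight (N - 1) m = (Real.log (N : ℝ) - Real.log ((N : ℝ) - 1)) / Real.log 2 ∧
      (∀ k ∈ Finset.Icc 1 (N - 1), gapRight (N - 1) k ≤ gapRight (N - 1) m) ∧
      0 < Int.fract (xseq N - xseq m) ∧
      Int.fract (xseq N - xseq m) < gapRight (N - 1) m ∧
      Int.fract (xseq N - xseq m) =
        (Real.log (2 * (N : ℝ) - 1) - Real.log (2 * (N : ℝ) - 2)) / Real.log 2 ∧
      gapRight (N - 1) m - Int.fract (xseq N - xseq m) =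
        (Real.log (2 * (N : ℝ)) - Real.log (2 * (N : ℝ) - 1)) / Real.log 2 := by
  obtain ⟨P, rfl⟩ : ∃ P, N = P + 1 := ⟨N - 1, by omega⟩
  have hP : 2 ≤ P := by omega
  have hP0 : (0 : ℝ) < P := by exact_mod_cast (by omega : 0 < P)
  -- `x_m = {log₂ P}` is the left end point of the largest gap
  obtain ⟨m, hm : m ∈ Icc 1 P, hmP : dyadicRep P (2 * m - 1) = P⟩ :=
    dyadicRep_odd_surjOn P (by rw [coe_Ico, Set.mem_Ico]; omega : P ∈ (Ico P (2 * P) : Set ℕ))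
  have hgap : gapRight P m = logb 2 ((P : ℝ) + 1) - logb 2 P := by
    rw [gapRight_eq hP hm, hmP]
  have hsplit := fract_xseq_succ_sub_xseq (by omega) (mem_Icc.mp hm).1 hmP
  have h2P := logb_two_two_mul hP0.ne'
  have h2P1 := logb_two_two_mul (by positivity : (P : ℝ) + 1 ≠ 0)
  have hlt₁ := logb_lt_logb one_lt_two (by positivity) (by linarith : 2 * (P : ℝ) < 2 * P + 1)
  have hlt₂ := logb_lt_logb one_lt_two (by positivity)
    (by linarith : 2 * (P : ℝ) + 1 < 2 * (P + 1))
  simp only [Nat.add_sub_cancel, Nat.cast_add, Nat.cast_one, add_sub_cancel_right, sub_div,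
    log_div_log, show 2 * ((P : ℝ) + 1) - 1 = 2 * P + 1 by ring,
    show 2 * ((P : ℝ) + 1) - 2 = 2 * P by ring]
  refine ⟨m, hm, hgap, fun k hk ↦ hgap ▸ gapRight_le hP hk, by linarith, by linarith, hsplit,
    by linarith⟩
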